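/- The set Z of trivalent trees in (X_2, d_2) has infinite lower box dimension: liminf_{m→∞} (1/m)·log Λ(Z, m) = ∞. -/

import Mathlib

open Filter
open scoped ENNReal

noncomputable section

namespace GraphTrees

/-- The word length of an element of a free group: the length of its reduced word. -/
def wlen {n : ℕ} (g : FreeGroup (Fin n)) : ℕ := (FreeGroup.toWord g).length

/-- `h` is a prefix of `g`. -/
def IsPref {n : ℕ} (h g : FreeGroup (Fin n)) : Prop :=
  wlen h + wlen (h⁻¹ * g) = wlen g

/-- Vertex sets of infinite connected subtrees of the Cayley graph of the free group on
`n` generators which contain the identity: subsets containing `1`, infinite, and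
prefix-closed. -/
def IsTree {n : ℕ} (S : Set (FreeGroup (Fin n))) : Prop :=
  1 ∈ S ∧ S.Infinite ∧ ∀ g ∈ S, ∀ h : FreeGroup (Fin n), IsPref h g → h ∈ S

/-- The space `X n` of pointed trees. -/
def X (n : ℕ) : Type := {S : Set (FreeGroup (Fin n)) // IsTree S}

variable {n : ℕ}

/-- The pattern `B_S(m)` of radius `m` of a pointed tree. -/
def ball (S : X n) (m : ℕ) : Set (FreeGroup (Fin n)) := {g ∈ S.1 | wlen g ≤ m}

/-- The set of radii on which two pointed trees have the same pattern. -/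
def agreeSet (S S' : X n) : Set ℕ := {m | ball S m = ball S' m}

/-- The ball metric on the space of pointed trees. -/
def tdist (S S' : X n) : ℝ :=
  letI := Classical.propDecidable (S = S')
  if S = S' then 0 else Real.exp (-((sSup (agreeSet S S') : ℕ) : ℝ))

theorem tdist_eq_of_ne {x y : X n} (h : x ≠ y) :
    tdist x y = Real.exp (-((sSup (agreeSet x y) : ℕ) : ℝ)) := by
  unfold tdist
  rw [if_neg h]

theorem ball_mono_eq {x y : X n} {k m : ℕ} (hkm : k ≤ m)
    (h : ball x m = ball y m) : ball x k = ball y k := by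
  ext g
  constructor
  · rintro ⟨hg, hlen⟩
    have hx : g ∈ ball x m := ⟨hg, hlen.trans hkm⟩
    rw [h] at hx
    exact ⟨hx.1, hlen⟩
  · rintro ⟨hg, hlen⟩
    have hy : g ∈ ball y m := ⟨hg, hlen.trans hkm⟩
    rw [← h] at hy
    exact ⟨hy.1, hlen⟩

theorem eq_of_agree_all {x y : X n} (h : ∀ m, ball x m = ball y m) : x = y := by
  apply Subtype.ext
  ext g
  constructor
  · intro hg
    have hx : g ∈ ball x (wlen g) := ⟨hg, le_rfl⟩
    rw [h] at hx
    exact hx.1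
  · intro hg
    have hy : g ∈ ball y (wlen g) := ⟨hg, le_rfl⟩
    rw [← h] at hy
    exact hy.1

theorem bddAbove_agreeSet {x y : X n} (h : x ≠ y) : BddAbove (agreeSet x y) := by
  by_contra hb
  refine h (eq_of_agree_all fun m => ?_)
  rcases not_bddAbove_iff.mp hb m with ⟨k, hk, hmk⟩
  exact ball_mono_eq hmk.le hk

theorem ball_zero (x : X n) : ball x 0 = {1} := by
  ext g
  simp only [ball, Set.mem_setOf_eq, Nat.le_zero, Set.mem_singleton_iff]
  constructor
  · rintro ⟨hg, hlen⟩
    exact FreeGroup.toWord_eq_nil_iff.mp (List.length_eq_zero_iff.mp hlen)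
  · rintro rfl
    exact ⟨x.2.1, by simp [wlen]⟩

theorem zero_mem_agreeSet (x y : X n) : (0 : ℕ) ∈ agreeSet x y := by
  show ball x 0 = ball y 0
  rw [ball_zero, ball_zero]

theorem tdist_nonneg (x y : X n) : 0 ≤ tdist x y := by
  rcases eq_or_ne x y with rfl | h
  · unfold tdist
    rw [if_pos rfl]
  · rw [tdist_eq_of_ne h]
    exact (Real.exp_pos _).le

theorem tdist_self (x : X n) : tdist x x = 0 := by
  unfold tdist
  rw [if_pos rfl]

theorem tdist_comm (x y : X n) : tdist x y = tdist y x := by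
  by_cases h : x = y
  · subst h; rfl
  · have hs : agreeSet x y = agreeSet y x := by
      ext m
      exact eq_comm
    rw [tdist_eq_of_ne h, tdist_eq_of_ne (Ne.symm h), hs]

theorem tdist_ultra (x y z : X n) : tdist x z ≤ max (tdist x y) (tdist y z) := by
  rcases eq_or_ne x z with rfl | hxz
  · exact le_max_of_le_left (by rw [tdist_self]; exact tdist_nonneg x y)
  rcases eq_or_ne x y with rfl | hxy
  · exact le_max_of_le_right le_rfl
  rcases eq_or_ne y z with rfl | hyz
  · exact le_max_of_le_left le_rfl
  have hbxy := bddAbove_agreeSet hxy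
  have hbyz := bddAbove_agreeSet hyz
  have hbxz := bddAbove_agreeSet hxz
  have hma : sSup (agreeSet x y) ∈ agreeSet x y :=
    Nat.sSup_mem ⟨0, zero_mem_agreeSet x y⟩ hbxy
  have hmb : sSup (agreeSet y z) ∈ agreeSet y z :=
    Nat.sSup_mem ⟨0, zero_mem_agreeSet y z⟩ hbyz
  have hmin : min (sSup (agreeSet x y)) (sSup (agreeSet y z)) ∈ agreeSet x z := by
    have h1 : ball x (min (sSup (agreeSet x y)) (sSup (agreeSet y z)))
        = ball y (min (sSup (agreeSet x y)) (sSup (agreeSet y z))) :=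
      ball_mono_eq (min_le_left _ _) hma
    have h2 : ball y (min (sSup (agreeSet x y)) (sSup (agreeSet y z)))
        = ball z (min (sSup (agreeSet x y)) (sSup (agreeSet y z))) :=
      ball_mono_eq (min_le_right _ _) hmb
    exact h1.trans h2
  have hle : min (sSup (agreeSet x y)) (sSup (agreeSet y z)) ≤ sSup (agreeSet x z) :=
    le_csSup hbxz hmin
  rw [tdist_eq_of_ne hxz, tdist_eq_of_ne hxy, tdist_eq_of_ne hyz]
  rcases le_total (sSup (agreeSet x y)) (sSup (agreeSet y z)) with hab | hab
  · refine le_max_of_le_left (Real.exp_le_exp.mpr ?_)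
    have h2 : ((sSup (agreeSet x y) : ℕ) : ℝ) ≤ ((sSup (agreeSet x z) : ℕ) : ℝ) := by
      exact_mod_cast (min_eq_left hab) ▸ hle
    linarith
  · refine le_max_of_le_right (Real.exp_le_exp.mpr ?_)
    have h2 : ((sSup (agreeSet y z) : ℕ) : ℝ) ≤ ((sSup (agreeSet x z) : ℕ) : ℝ) := by
      exact_mod_cast (min_eq_right hab) ▸ hle
    linarith

theorem tdist_triangle (x y z : X n) : tdist x z ≤ tdist x y + tdist y z :=
  (tdist_ultra x y z).trans
    (max_le (le_add_of_nonneg_right (tdist_nonneg y z))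
      (le_add_of_nonneg_left (tdist_nonneg x y)))

instance : MetricSpace (X n) where
  dist := tdist
  dist_self := tdist_self
  dist_comm := tdist_comm
  dist_triangle := tdist_triangle
  eq_of_dist_eq_zero := by
    intro x y h
    by_contra hne
    have h' : tdist x y = 0 := h
    rw [tdist_eq_of_ne hne] at h'
    exact (Real.exp_pos _).ne' h'

theorem dist_eq_tdist (x y : X n) : dist x y = tdist x y := rfl

/-- The translate `S · g` of a tree `S` by a vertex `g ∈ S`. -/
def translate {n : ℕ} (S : Set (FreeGroup (Fin n))) (g : FreeGroup (Fin n)) :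
    Set (FreeGroup (Fin n)) := (fun h => g⁻¹ * h) '' S

/-- The orbit `O(S) = {S · g : g ∈ S}` of a pointed tree under the pseudogroup action. -/
def orbit (S : X n) : Set (X n) := {S' | ∃ g ∈ S.1, S'.1 = translate S.1 g}

/-- A subset `Y ⊆ X n` is invariant under the pseudogroup action. -/
def Invariant (Y : Set (X n)) : Prop :=
  ∀ S ∈ Y, ∀ g ∈ S.1, ∀ S' : X n, S'.1 = translate S.1 g → S' ∈ Y

/-- `Λ(Z, m)`: the number of distinct patterns of radius `m` of trees in `Z`. -/
def Lam (Z : Set (X n)) (m : ℕ) : ℕ := ((fun S => ball S m) '' Z).ncard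

/-- The lower box dimension of a subset of the space of pointed trees. -/
def lowerBox (Z : Set (X n)) : ℝ≥0∞ :=
  Filter.liminf (fun m : ℕ => ENNReal.ofReal (Real.log (Lam Z m)) / (m : ℝ≥0∞)) Filter.atTop

/-- The upper box dimension of a subset of the space of pointed trees. -/
def upperBox (Z : Set (X n)) : ℝ≥0∞ :=
  Filter.limsup (fun m : ℕ => ENNReal.ofReal (Real.log (Lam Z m)) / (m : ℝ≥0∞)) Filter.atTop


/-- The set of trivalent trees in `X 2`: every vertex has exactly three neighbours. -/
def Ztri : Set (X 2) :=
  {S | ∀ g ∈ S.1, ({h ∈ S.1 | wlen (g⁻¹ * h) = 1} : Set (FreeGroup (Fin 2))).encard = 3}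

/-!
Inside the 4-regular Cayley tree, a trivalent subtree is obtained by letting the root keep three
of its four edges and every other vertex keep two of its three forward edges. Let every vertex go
straight on and turn onto the other generator, the sign of the turn being a free bit. If the bit
is `true` at every positive word of length at most `K`, the tree contains all `2 ^ (K + 1)`
positive words of length `K + 1`, and the bits chosen at those words are read off from the ball
of radius `K + 2`. Hence `Λ(Z, K + 2) ≥ 2 ^ 2 ^ (K + 1)`, so `log Λ(Z, m) / m` grows like
`2 ^ m / m`.
-/

theorem IsPref.toWord_prefix {h g : FreeGroup (Fin n)} (hp : IsPref h g) :
    h.toWord <+: g.toWord := by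
  have hs := FreeGroup.toWord_mul_sublist h (h⁻¹ * g)
  rw [mul_inv_cancel_left] at hs
  exact ⟨_, (hs.eq_of_length (by rw [List.length_append]; exact hp.symm)).symm⟩

theorem finite_setOf_wlen_le (m : ℕ) : {g : FreeGroup (Fin n) | wlen g ≤ m}.Finite :=
  (List.finite_length_le _ m).preimage FreeGroup.toWord_injective.injOn

theorem finite_image_ball (Z : Set (X n)) (m : ℕ) : ((fun S => ball S m) '' Z).Finite :=
  (finite_setOf_wlen_le m).finite_subsets.subset <| by
    rintro _ ⟨S, -, rfl⟩ g hg
    exact hg.2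

section FreeGroup

variable {α : Type*}

theorem isReduced_append_singleton_iff {w : List (α × Bool)} {x : α × Bool} :
    FreeGroup.IsReduced (w ++ [x]) ↔
      FreeGroup.IsReduced w ∧ ∀ y ∈ w.getLast?, x ≠ (y.1, !y.2) := by
  simp only [FreeGroup.IsReduced, List.isChain_append, List.isChain_singleton, true_and,
    List.head?_cons, Option.mem_def, Option.some.injEq, forall_eq']
  refine and_congr_right fun _ => forall₂_congr fun y _ => ?_
  rw [Ne, Prod.ext_iff, not_and, Bool.eq_not, not_not]
  exact ⟨fun h e => (h e.symm).symm, fun h e => (h e.symm).symm⟩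

theorem isReduced_of_forall_snd_eq_true {w : List (α × Bool)}
    (hw : ∀ x ∈ w, x.2 = true) : FreeGroup.IsReduced w :=
  List.Pairwise.isChain <| List.pairwise_of_forall_mem_list
    fun a ha b hb (_ : a.1 = b.1) => (hw a ha).trans (hw b hb).symm

variable [DecidableEq α]

theorem toWord_mul_mk_singleton {g : FreeGroup α} {x : α × Bool}
    (hx : ∀ y ∈ g.toWord.getLast?, x ≠ (y.1, !y.2)) :
    (g * FreeGroup.mk [x]).toWord = g.toWord ++ [x] := by
  rw [FreeGroup.toWord_mul, FreeGroup.toWord_mk, FreeGroup.reduce_singleton]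
  exact (isReduced_append_singleton_iff.mpr ⟨FreeGroup.isReduced_toWord, hx⟩).reduce_eq

theorem mul_mk_inv_getLast {g : FreeGroup α} {y : α × Bool} (hy : g.toWord.getLast? = some y) :
    g * FreeGroup.mk [(y.1, !y.2)] = FreeGroup.mk g.toWord.dropLast := by
  have hw : g.toWord = g.toWord.dropLast ++ [y] := (List.dropLast_append_getLast? y hy).symm
  conv_lhs => rw [← FreeGroup.mk_toWord (x := g), hw, ← FreeGroup.mul_mk]
  have hinv : FreeGroup.mk [(y.1, !y.2)] = (FreeGroup.mk [y])⁻¹ := by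
    simp [FreeGroup.inv_mk, FreeGroup.invRev]
  rw [mul_assoc, hinv, mul_inv_cancel, mul_one]

end FreeGroup

theorem encard_neighbours (S : Set (FreeGroup (Fin n))) (g : FreeGroup (Fin n)) :
    ({h ∈ S | wlen (g⁻¹ * h) = 1} : Set (FreeGroup (Fin n))).encard =
      {x | g * FreeGroup.mk [x] ∈ S}.encard := by
  have hinj : Function.Injective fun x : Fin n × Bool => g * FreeGroup.mk [x] := by
    intro x y hxy
    simpa [FreeGroup.toWord_mk] using congrArg FreeGroup.toWord (mul_left_cancel hxy)
  rw [← hinj.injOn.encard_image]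
  congr 1
  ext h
  constructor
  · rintro ⟨hS, hlen⟩
    obtain ⟨x, hx⟩ := List.length_eq_one_iff.mp hlen
    have hh : g * FreeGroup.mk [x] = h := by
      rw [← hx, FreeGroup.mk_toWord, mul_inv_cancel_left]
    exact ⟨x, show g * _ ∈ S from hh ▸ hS, hh⟩
  · rintro ⟨x, hx, rfl⟩
    exact ⟨hx, by simp [wlen, FreeGroup.toWord_mk]⟩

section Tree

variable {ε : List (Fin 2 × Bool) → Bool} {w : List (Fin 2 × Bool)} {x y : Fin 2 × Bool}

def children (ε : List (Fin 2 × Bool) → Bool) (w : List (Fin 2 × Bool)) :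
    Finset (Fin 2 × Bool) :=
  match w.getLast? with
  | none => {(0, true), (0, false), (1, true)}
  | some (i, e) => {(i, e), (1 - i, ε w)}

theorem children_of_getLast (hy : w.getLast? = some y) :
    children ε w = {y, (1 - y.1, ε w)} := by
  simp [children, hy]

def Legal (ε : List (Fin 2 × Bool) → Bool) (w : List (Fin 2 × Bool)) : Prop :=
  ∀ u x, u ++ [x] <+: w → x ∈ children ε u

theorem legal_nil : Legal ε [] := by
  simp [Legal]

theorem Legal.of_prefix {u : List (Fin 2 × Bool)} (h : Legal ε w) (hu : u <+: w) : Legal ε u :=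
  fun v x hv => h v x (hv.trans hu)

theorem legal_append_singleton_iff :
    Legal ε (w ++ [x]) ↔ Legal ε w ∧ x ∈ children ε w := by
  refine ⟨fun h => ⟨h.of_prefix (List.prefix_append _ _), h w x (List.prefix_refl _)⟩, ?_⟩
  rintro ⟨hw, hx⟩ u y huy
  rcases List.prefix_concat_iff.mp huy with heq | hp
  · obtain ⟨rfl, rfl⟩ := List.append_singleton_inj.mp heq
    exact hx
  · exact hw u y hp

theorem legal_replicate (k : ℕ) : Legal ε (List.replicate k ((0 : Fin 2), true)) := by
  induction k with
  | zero => exact legal_nil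
  | succ k ih =>
    rw [List.replicate_succ']
    refine legal_append_singleton_iff.mpr ⟨ih, ?_⟩
    cases k with
    | zero => simp [children]
    | succ k =>
      have hlast : (List.replicate (k + 1) ((0 : Fin 2), true)).getLast? = some (0, true) := by
        rw [List.getLast?_replicate]; simp
      simp [children_of_getLast hlast]

theorem isTree_setOf_legal (ε : List (Fin 2 × Bool) → Bool) :
    IsTree {g : FreeGroup (Fin 2) | Legal ε g.toWord} := by
  refine ⟨by simpa using legal_nil, ?_, fun g hg h hp => Legal.of_prefix hg hp.toWord_prefix⟩
  refine Set.infinite_of_injective_forall_mem (f := fun k : ℕ => FreeGroup.of (0 : Fin 2) ^ k)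
    (fun k l hkl => by simpa using congrArg FreeGroup.norm hkl) fun k => ?_
  simpa [FreeGroup.toWord_of_pow] using legal_replicate k

def tree (ε : List (Fin 2 × Bool) → Bool) : X 2 :=
  ⟨{g | Legal ε g.toWord}, isTree_setOf_legal ε⟩

theorem mul_mk_mem_tree_iff {g : FreeGroup (Fin 2)} (hg : g ∈ (tree ε).1)
    (hx : ∀ y ∈ g.toWord.getLast?, x ≠ (y.1, !y.2)) :
    g * FreeGroup.mk [x] ∈ (tree ε).1 ↔ x ∈ children ε g.toWord := by
  change Legal ε _ ↔ _
  rw [toWord_mul_mk_singleton hx, legal_append_singleton_iff]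
  exact and_iff_right hg

theorem mul_mk_inv_getLast_mem_tree {g : FreeGroup (Fin 2)} (hg : g ∈ (tree ε).1)
    (hy : g.toWord.getLast? = some y) : g * FreeGroup.mk [(y.1, !y.2)] ∈ (tree ε).1 := by
  have hp := List.dropLast_prefix g.toWord
  change Legal ε _
  rw [mul_mk_inv_getLast hy, FreeGroup.toWord_mk,
    (FreeGroup.isReduced_toWord.infix hp.isInfix).reduce_eq]
  exact Legal.of_prefix hg hp

theorem encard_setOf_mul_mk_mem_tree {g : FreeGroup (Fin 2)} (hg : g ∈ (tree ε).1) :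
    {x | g * FreeGroup.mk [x] ∈ (tree ε).1}.encard = 3 := by
  rcases hlast : g.toWord.getLast? with _ | y
  · have hset : {x | g * FreeGroup.mk [x] ∈ (tree ε).1} = ↑(children ε g.toWord) :=
      Set.ext fun x => mul_mk_mem_tree_iff hg (by simp [hlast])
    rw [hset, Set.encard_coe_eq_coe_finsetCard, children, hlast]
    rfl
  · have hset : {x | g * FreeGroup.mk [x] ∈ (tree ε).1} =
        ↑(insert (y.1, !y.2) (children ε g.toWord)) := by
      ext x
      by_cases hx : x = (y.1, !y.2)
      · simp [hx, mul_mk_inv_getLast_mem_tree hg hlast]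
      · simp [hx, mul_mk_mem_tree_iff hg (x := x) (by simpa [hlast])]
    -- `decide` also checks that the backtracking letter `(y.1, !y.2)` is not a child.
    have hcard : ∀ y b,
        (insert (y.1, !y.2) {y, (1 - y.1, b)} : Finset (Fin 2 × Bool)).card = 3 := by
      decide
    rw [hset, Set.encard_coe_eq_coe_finsetCard, children_of_getLast hlast, hcard]
    rfl

theorem tree_mem_Ztri (ε : List (Fin 2 × Bool) → Bool) : tree ε ∈ Ztri :=
  fun g hg => (encard_neighbours _ g).trans (encard_setOf_mul_mk_mem_tree hg)

theorem mem_children_of_snd_eq_true (hx : x.2 = true) (hw : ∀ y ∈ w.getLast?, y.2 = true)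
    (hε : ε w = true) : x ∈ children ε w := by
  obtain ⟨i, _⟩ := x
  subst hx
  rcases hlast : w.getLast? with _ | ⟨j, e⟩
  · fin_cases i <;> simp [children, hlast]
  · obtain rfl : e = true := hw _ hlast
    rw [children_of_getLast hlast, hε]
    clear hlast
    revert i j
    decide

theorem legal_of_forall_snd_eq_true (hw : ∀ x ∈ w, x.2 = true)
    (hε : ∀ u : List (Fin 2 × Bool), u.length < w.length → ε u = true) : Legal ε w := by
  rintro u x ⟨t, rfl⟩
  refine mem_children_of_snd_eq_true (hw x (by simp)) (fun y hy => hw y ?_) (hε u (by simp))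
  simp [List.mem_of_getLast? hy]

end Tree

def posWord {k : ℕ} (s : Fin k → Fin 2) : List (Fin 2 × Bool) :=
  List.ofFn fun j => (s j, true)

theorem posWord_injective (k : ℕ) : Function.Injective (posWord (k := k)) := fun s t h => by
  funext j
  simpa using congrFun (List.ofFn_injective h) j

theorem snd_eq_true_of_mem_posWord {k : ℕ} {s : Fin k → Fin 2} {x : Fin 2 × Bool}
    (hx : x ∈ posWord s) : x.2 = true := by
  obtain ⟨j, rfl⟩ := List.mem_ofFn.mp hx
  rfl

theorem toWord_mk_posWord {k : ℕ} (s : Fin k → Fin 2) :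
    (FreeGroup.mk (posWord s)).toWord = posWord s := by
  rw [FreeGroup.toWord_mk,
    (isReduced_of_forall_snd_eq_true fun _ => snd_eq_true_of_mem_posWord).reduce_eq]

theorem getLast?_posWord {K : ℕ} (s : Fin (K + 1) → Fin 2) :
    (posWord s).getLast? = some (s (Fin.last K), true) := by
  rw [posWord, List.ofFn_succ_last]
  simp

def bitsOf {K : ℕ} (φ : (Fin (K + 1) → Fin 2) → Bool) : List (Fin 2 × Bool) → Bool :=
  Function.extend posWord φ fun _ => true

section Family

variable {K : ℕ} (φ : (Fin (K + 1) → Fin 2) → Bool) (s : Fin (K + 1) → Fin 2)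

theorem mk_posWord_mem_tree_bitsOf : FreeGroup.mk (posWord s) ∈ (tree (bitsOf φ)).1 := by
  change Legal _ _
  rw [toWord_mk_posWord]
  refine legal_of_forall_snd_eq_true (fun _ => snd_eq_true_of_mem_posWord) fun u hu => ?_
  refine Function.extend_apply' _ _ _ ?_
  rintro ⟨t, rfl⟩
  simp [posWord] at hu

theorem mk_posWord_mul_turn_mem_tree_bitsOf_iff :
    FreeGroup.mk (posWord s) * FreeGroup.mk [(1 - s (Fin.last K), true)] ∈
      (tree (bitsOf φ)).1 ↔ φ s = true := by
  rw [mul_mk_mem_tree_iff (mk_posWord_mem_tree_bitsOf φ s)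
      (by rw [toWord_mk_posWord, getLast?_posWord]; simp), toWord_mk_posWord,
    children_of_getLast (getLast?_posWord s), bitsOf, (posWord_injective _).extend_apply]
  generalize φ s = b
  generalize s (Fin.last K) = i
  revert i b
  decide

end Family

theorem injective_ball_tree_bitsOf (K : ℕ) :
    Function.Injective fun φ : (Fin (K + 1) → Fin 2) → Bool =>
      ball (tree (bitsOf φ)) (K + 2) := by
  intro φ ψ h
  funext s
  have hlen : wlen (FreeGroup.mk (posWord s) * FreeGroup.mk [(1 - s (Fin.last K), true)]) ≤
      K + 2 := by
    have hs : (FreeGroup.mk (posWord s)).norm ≤ K + 1 :=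
      FreeGroup.norm_mk_le.trans (by simp [posWord])
    exact (FreeGroup.norm_mul_le _ _).trans (add_le_add hs FreeGroup.norm_mk_le : _ ≤ K + 1 + 1)
  have key (χ : (Fin (K + 1) → Fin 2) → Bool) :
      χ s = true ↔ _ ∈ ball (tree (bitsOf χ)) (K + 2) :=
    (mk_posWord_mul_turn_mem_tree_bitsOf_iff χ s).symm.trans (and_iff_left hlen).symm
  rw [Bool.eq_iff_iff, key φ, key ψ, show ball (tree (bitsOf φ)) (K + 2) = _ from h]

theorem two_pow_two_pow_le_lam_Ztri (K : ℕ) : 2 ^ 2 ^ (K + 1) ≤ Lam Ztri (K + 2) :=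
  calc 2 ^ 2 ^ (K + 1) = Nat.card ((Fin (K + 1) → Fin 2) → Bool) := by simp
    _ = (Set.range fun φ : (Fin (K + 1) → Fin 2) → Bool =>
          ball (tree (bitsOf φ)) (K + 2)).ncard :=
      (Set.ncard_range_of_injective (injective_ball_tree_bitsOf K)).symm
    _ ≤ Lam Ztri (K + 2) :=
      Set.ncard_le_ncard (Set.range_subset_iff.mpr fun φ => ⟨_, tree_mem_Ztri _, rfl⟩)
        (finite_image_ball _ _)

theorem tendsto_pow_div_self_atTop {r : ℝ} (hr : 1 < r) :
    Tendsto (fun m : ℕ => r ^ m / m) atTop atTop := by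
  have hpos : ∀ᶠ m : ℕ in atTop, (m : ℝ) ^ 1 / r ^ m ∈ Set.Ioi 0 := by
    filter_upwards [eventually_gt_atTop (0 : ℕ)] with m hm
    exact div_pos (pow_pos (Nat.cast_pos.mpr hm) 1) (pow_pos (one_pos.trans hr) m)
  refine (tendsto_nhdsWithin_iff.mpr
    ⟨tendsto_pow_const_div_const_pow_of_one_lt 1 hr, hpos⟩).inv_tendsto_nhdsGT_zero.congr
    fun m => ?_
  simp

theorem tendsto_log_lam_Ztri_div_atTop :
    Tendsto (fun m : ℕ => Real.log (Lam Ztri m) / m) atTop atTop := by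
  refine tendsto_atTop_mono' atTop ?_
    ((tendsto_pow_div_self_atTop one_lt_two).atTop_mul_const (by positivity : 0 < Real.log 2 / 2))
  filter_upwards [eventually_ge_atTop 2] with m hm
  obtain ⟨K, rfl⟩ : ∃ K, m = K + 2 := ⟨m - 2, by omega⟩
  have hlam : ((2 ^ 2 ^ (K + 1) : ℕ) : ℝ) ≤ Lam Ztri (K + 2) := by
    exact_mod_cast two_pow_two_pow_le_lam_Ztri K
  have hlog := Real.log_le_log (by positivity) hlam
  push_cast at hlog
  rw [Real.log_pow] at hlog
  rw [div_mul_eq_mul_div, div_le_div_iff_of_pos_right (by positivity)]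
  calc (2 : ℝ) ^ (K + 2) * (Real.log 2 / 2) = (2 ^ (K + 1) : ℕ) * Real.log 2 := by
        push_cast; ring
    _ ≤ _ := hlog

theorem lowerBox_eq_top_of_tendsto {Z : Set (X n)}
    (h : Tendsto (fun m : ℕ => Real.log (Lam Z m) / m) atTop atTop) : lowerBox Z = ⊤ := by
  refine ((ENNReal.tendsto_ofReal_atTop.comp h).congr' ?_).liminf_eq
  filter_upwards [eventually_gt_atTop (0 : ℕ)] with m hm
  simp [ENNReal.ofReal_div_of_pos (Nat.cast_pos.mpr hm)]

/-- The set of trivalent trees in `(X_2, d_2)` has infinite lower box dimension. -/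
theorem lowerBox_trivalent_eq_top : lowerBox Ztri = ⊤ :=
  lowerBox_eq_top_of_tendsto tendsto_log_lam_Ztri_div_atTop

end GraphTrees
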